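/- arXiv:1803.04157 — 3 statements merged into one kernel-verified Lean document; each statement's English description precedes it below -/
import Mathlib

section
/- As t → ∞, ∫₀^∞ exp(ν√t y) · √(2/π) · exp(−y²/2) dy ∼ −(1/ν)·√(2/(πt)) for any fixed ν < 0. -/
/-!
Substituting `u = a y` with `a = -ν √t` turns the ratio into
`a ∫₀^∞ exp(-a y - y²/2) dy = ∫₀^∞ exp(-u - u²/(2a²)) du`, which tends to `∫₀^∞ exp(-u) du = 1`
by dominated convergence with dominating function `exp(-u)`.
-/

open MeasureTheory Filter Topology Real Set

lemma tendsto_integral_exp_neg_sub_mul_sq :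
    Tendsto (fun ε : ℝ => ∫ u in Ioi (0 : ℝ), exp (-u - ε * u ^ 2)) (𝓝[≥] 0) (𝓝 1) := by
  rw [← integral_exp_neg_Ioi_zero]
  refine tendsto_integral_filter_of_dominated_convergence (fun u => exp (-u))
    (Eventually.of_forall fun ε => (by fun_prop : Continuous _).aestronglyMeasurable)
    ?_ (exp_neg_integrableOn_Ioi 0 one_pos |>.congr_fun (fun u _ => by simp) measurableSet_Ioi)
    (Eventually.of_forall fun u => ?_)
  · filter_upwards [self_mem_nhdsWithin] with ε (hε : 0 ≤ ε)
    refine Eventually.of_forall fun u => ?_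
    rw [norm_of_nonneg (exp_pos _).le, exp_le_exp]
    nlinarith [sq_nonneg u]
  · have hcont : Continuous fun ε : ℝ => exp (-u - ε * u ^ 2) := by fun_prop
    simpa using (hcont.tendsto 0).mono_left nhdsWithin_le_nhds

lemma mul_integral_exp_neg_mul_sub_sq_eq {a : ℝ} (ha : 0 < a) :
    a * ∫ y in Ioi (0 : ℝ), exp (-(a * y) - y ^ 2 / 2)
      = ∫ u in Ioi (0 : ℝ), exp (-u - (2 * a ^ 2)⁻¹ * u ^ 2) := by
  have hscale := integral_comp_mul_left_Ioi (fun u => exp (-u - (2 * a ^ 2)⁻¹ * u ^ 2)) 0 ha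
  rw [mul_zero, smul_eq_mul] at hscale
  have hsq : ∀ y : ℝ, (2 * a ^ 2)⁻¹ * (a * y) ^ 2 = y ^ 2 / 2 := fun y => by
    field_simp
  simp only [hsq] at hscale
  rw [hscale, ← mul_assoc, mul_inv_cancel₀ ha.ne', one_mul]

lemma tendsto_mul_integral_exp_neg_mul_sub_sq :
    Tendsto (fun a : ℝ => a * ∫ y in Ioi (0 : ℝ), exp (-(a * y) - y ^ 2 / 2)) atTop (𝓝 1) := by
  have hε : Tendsto (fun a : ℝ => (2 * a ^ 2)⁻¹) atTop (𝓝[≥] 0) :=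
    (tendsto_inv_atTop_nhdsGT_zero.mono_right (nhdsWithin_mono _ Ioi_subset_Ici_self)).comp
      ((tendsto_pow_atTop two_ne_zero).const_mul_atTop two_pos)
  refine (tendsto_integral_exp_neg_sub_mul_sq.comp hε).congr' ?_
  filter_upwards [eventually_gt_atTop 0] with a ha
  exact (mul_integral_exp_neg_mul_sub_sq_eq ha).symm

/-- Partition function asymptotic on `L₁`: for fixed `ν < 0`,
`∫₀^∞ exp(ν√t y) √(2/π) exp(−y²/2) dy ∼ −(1/ν)√(2/(πt))` as `t → ∞`. -/
theorem partition_asymptotic_L1 (ν : ℝ) (hν : ν < 0) :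
    Tendsto
      (fun t : ℝ =>
        (∫ y in Set.Ioi (0:ℝ), exp (ν * sqrt t * y) * (sqrt (2 / π) * exp (-y ^ 2 / 2))) /
          (-(1 / ν) * sqrt (2 / (π * t))))
      atTop (𝓝 1) := by
  have ha : Tendsto (fun t : ℝ => -ν * sqrt t) atTop atTop :=
    tendsto_sqrt_atTop.const_mul_atTop (neg_pos.mpr hν)
  refine (tendsto_mul_integral_exp_neg_mul_sub_sq.comp ha).congr' ?_
  filter_upwards [eventually_gt_atTop 0] with t ht
  have hnum : (∫ y in Ioi (0 : ℝ), exp (ν * sqrt t * y) * (sqrt (2 / π) * exp (-y ^ 2 / 2)))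
      = sqrt (2 / π) * ∫ y in Ioi (0 : ℝ), exp (-(-ν * sqrt t * y) - y ^ 2 / 2) := by
    rw [← integral_const_mul]
    refine setIntegral_congr_fun measurableSet_Ioi fun y _ => ?_
    rw [mul_left_comm, ← exp_add]
    congr 2
    ring
  have hden : -(1 / ν) * sqrt (2 / (π * t)) = sqrt (2 / π) / (-ν * sqrt t) := by
    rw [div_mul_eq_div_div, sqrt_div' _ ht.le]
    field_simp
  rw [Function.comp_apply, hnum, hden]
  field_simp
end

section
/- For h < 0, as t → ∞, √(2/π) t^{3/2} ∫₀^∞ y² exp(−(hy + y²/2) t) dy ∼ 2 h² t exp(h² t / 2). -/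
open MeasureTheory Filter Topology Real

private lemma integral_comp_add_right_Ioi' (g : ℝ → ℝ) (a c : ℝ) :
    ∫ x in Set.Ioi a, g (x + c) = ∫ x in Set.Ioi (a + c), g x := by
  rw [← integral_indicator measurableSet_Ioi, ← integral_indicator measurableSet_Ioi,
    ← integral_add_right_eq_self (Set.indicator (Set.Ioi (a + c)) g) c]
  congr 1
  ext x
  by_cases hx : a < x
  · simp [Set.indicator, Set.mem_Ioi, hx]
  · simp [Set.indicator, Set.mem_Ioi, hx]

private lemma sqrt_tendsto_atTop' : Tendsto Real.sqrt atTop atTop := by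
  refine (tendsto_rpow_atTop one_half_pos).congr fun x => ?_
  rw [← Real.sqrt_eq_rpow]

/-- Partition function asymptotic on `L₃` via Laplace's method: for `h < 0`,
`√(2/π) t^{3/2} ∫₀^∞ y² exp(−(hy + y²/2)t) dy ∼ 2h²t exp(h²t/2)` as `t → ∞`. -/
theorem partition_asymptotic_L3 (h : ℝ) (hh : h < 0) :
    Tendsto
      (fun t : ℝ =>
        (sqrt (2 / π) * t ^ ((3:ℝ)/2) * ∫ y in Set.Ioi (0:ℝ), y ^ 2 * exp (-(h * y + y ^ 2 / 2) * t)) /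
          (2 * h ^ 2 * t * exp (h ^ 2 * t / 2)))
      atTop (𝓝 1) := by
  have hπ : (0:ℝ) < π := pi_pos
  have hne : h ≠ 0 := ne_of_lt hh
  have hh2 : (0:ℝ) < h ^ 2 := by positivity
  set F : ℝ → ℝ → ℝ := fun t v =>
    Set.indicator (Set.Ioi (Real.sqrt t * h))
      (fun v => (v / Real.sqrt t - h) ^ 2 * Real.exp (-v ^ 2 / 2)) v with hF
  -- limit of the rescaled integral
  have hJ : Tendsto (fun t => ∫ v, F t v) atTop (𝓝 (∫ v : ℝ, h ^ 2 * Real.exp (-v ^ 2 / 2))) := by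
    apply tendsto_integral_filter_of_dominated_convergence
      (fun v => (2 * v ^ 2 + 2 * h ^ 2) * Real.exp (-v ^ 2 / 2))
    · filter_upwards with t
      apply (Measurable.indicator _ measurableSet_Ioi).aestronglyMeasurable
      exact (((measurable_id.div_const _).sub_const h).pow_const 2).mul
        ((measurable_id.pow_const 2).neg.div_const 2).exp
    · filter_upwards [eventually_ge_atTop (1:ℝ)] with t ht
      filter_upwards with v
      have hst : (1:ℝ) ≤ Real.sqrt t := by
        rw [show (1:ℝ) = Real.sqrt 1 by simp]; exact Real.sqrt_le_sqrt ht
      show ‖Set.indicator (Set.Ioi (Real.sqrt t * h))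
          (fun v => (v / Real.sqrt t - h) ^ 2 * Real.exp (-v ^ 2 / 2)) v‖
        ≤ (2 * v ^ 2 + 2 * h ^ 2) * Real.exp (-v ^ 2 / 2)
      by_cases hv : v ∈ Set.Ioi (Real.sqrt t * h)
      · rw [Set.indicator_of_mem hv]
        rw [Real.norm_eq_abs, abs_mul, abs_of_nonneg (sq_nonneg _),
          abs_of_nonneg (Real.exp_pos _).le]
        apply mul_le_mul_of_nonneg_right _ (Real.exp_pos _).le
        have h1 : (v / Real.sqrt t) ^ 2 ≤ v ^ 2 := by
          rw [div_pow]
          have h2 : (1:ℝ) ≤ Real.sqrt t ^ 2 := one_le_pow₀ hst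
          calc v ^ 2 / Real.sqrt t ^ 2 ≤ v ^ 2 / 1 :=
                div_le_div_of_nonneg_left (sq_nonneg v) one_pos h2
            _ = v ^ 2 := div_one _
        nlinarith [sq_nonneg (v / Real.sqrt t + h)]
      · rw [Set.indicator_of_notMem hv]
        simp only [norm_zero]
        positivity
    · have h1 : Integrable (fun v : ℝ => v ^ 2 * Real.exp (-(1/2) * v ^ 2)) := by
        have := integrable_rpow_mul_exp_neg_mul_sq (b := 1/2) (by norm_num) (s := 2) (by norm_num)
        simpa [Real.rpow_two] using this
      have h2 : Integrable (fun v : ℝ => Real.exp (-(1/2) * v ^ 2)) :=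
        integrable_exp_neg_mul_sq (by norm_num)
      have h3 : Integrable (fun v : ℝ => 2 * (v ^ 2 * Real.exp (-(1/2) * v ^ 2))
          + 2 * h ^ 2 * Real.exp (-(1/2) * v ^ 2)) := (h1.const_mul 2).add (h2.const_mul _)
      refine h3.congr (ae_of_all _ fun v => ?_)
      show 2 * (v ^ 2 * Real.exp (-(1/2) * v ^ 2)) + 2 * h ^ 2 * Real.exp (-(1/2) * v ^ 2)
        = (2 * v ^ 2 + 2 * h ^ 2) * Real.exp (-v ^ 2 / 2)
      rw [show -(1/2:ℝ) * v ^ 2 = -v ^ 2 / 2 from by ring]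
      ring
    · filter_upwards with v
      have hlt : ∀ᶠ t in atTop, Real.sqrt t * h < v := by
        have hmb : Tendsto (fun t => Real.sqrt t * h) atTop atBot :=
          sqrt_tendsto_atTop'.atTop_mul_const_of_neg hh
        exact hmb.eventually (eventually_lt_atBot v)
      have hlim : Tendsto (fun t => (v / Real.sqrt t - h) ^ 2 * Real.exp (-v ^ 2 / 2)) atTop
          (𝓝 (h ^ 2 * Real.exp (-v ^ 2 / 2))) := by
        have hd : Tendsto (fun t => v / Real.sqrt t) atTop (𝓝 0) :=
          tendsto_const_nhds.div_atTop sqrt_tendsto_atTop'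
        have h5 := ((hd.sub_const h).pow 2).mul_const (Real.exp (-v ^ 2 / 2))
        simpa using h5
      refine hlim.congr' ?_
      filter_upwards [hlt] with t ht
      rw [hF]
      exact (Set.indicator_of_mem (Set.mem_Ioi.mpr ht)
        (fun v => (v / Real.sqrt t - h) ^ 2 * Real.exp (-v ^ 2 / 2))).symm
  -- compute the limit value
  have hval : (∫ v : ℝ, h ^ 2 * Real.exp (-v ^ 2 / 2)) = h ^ 2 * Real.sqrt (2 * π) := by
    rw [integral_const_mul]
    congr 1
    have hg := integral_gaussian (1/2 : ℝ)
    rw [show π / (1/2 : ℝ) = 2 * π by ring] at hg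
    rw [← hg]
    congr 1 with v
    congr 1
    ring
  rw [hval] at hJ
  -- eventual equality of the ratio with (√(2/π)/(2h²)) * J t
  have heq : ∀ᶠ t in atTop, (Real.sqrt (2 / π) / (2 * h ^ 2)) * (∫ v, F t v)
      = (Real.sqrt (2 / π) * t ^ ((3:ℝ)/2) *
        ∫ y in Set.Ioi (0:ℝ), y ^ 2 * Real.exp (-(h * y + y ^ 2 / 2) * t)) /
          (2 * h ^ 2 * t * Real.exp (h ^ 2 * t / 2)) := by
    filter_upwards [eventually_gt_atTop (0:ℝ)] with t ht
    have hst : (0:ℝ) < Real.sqrt t := Real.sqrt_pos.mpr ht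
    have e1 : ∀ y : ℝ, y ^ 2 * Real.exp (-(h * y + y ^ 2 / 2) * t)
        = Real.exp (h ^ 2 * t / 2) * (y ^ 2 * Real.exp (-(t/2) * (y + h) ^ 2)) := by
      intro y
      have hexp : Real.exp (-(h * y + y ^ 2 / 2) * t)
          = Real.exp (h ^ 2 * t / 2) * Real.exp (-(t/2) * (y + h) ^ 2) := by
        rw [← Real.exp_add]; congr 1; ring
      rw [hexp]; ring
    have e2 : (∫ y in Set.Ioi (0:ℝ), y ^ 2 * Real.exp (-(t/2) * (y + h) ^ 2))
        = ∫ u in Set.Ioi h, (u - h) ^ 2 * Real.exp (-(t/2) * u ^ 2) := by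
      have hpt : ∀ y : ℝ, y ^ 2 * Real.exp (-(t/2) * (y + h) ^ 2)
          = (fun u => (u - h) ^ 2 * Real.exp (-(t/2) * u ^ 2)) (y + h) := by
        intro y; simp [add_sub_cancel_right]
      simp only [hpt]
      rw [integral_comp_add_right_Ioi' (fun u => (u - h) ^ 2 * Real.exp (-(t/2) * u ^ 2)) 0 h,
        zero_add]
    have e3 : (∫ u in Set.Ioi h, (u - h) ^ 2 * Real.exp (-(t/2) * u ^ 2))
        = (Real.sqrt t)⁻¹ * ∫ v, F t v := by
      have key : ∀ u : ℝ, (u - h) ^ 2 * Real.exp (-(t/2) * u ^ 2)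
          = (fun v => (v / Real.sqrt t - h) ^ 2 * Real.exp (-v ^ 2 / 2)) (Real.sqrt t * u) := by
        intro u
        show _ = (Real.sqrt t * u / Real.sqrt t - h) ^ 2 * Real.exp (-(Real.sqrt t * u) ^ 2 / 2)
        rw [mul_div_cancel_left₀ _ hst.ne']
        congr 2
        rw [mul_pow, Real.sq_sqrt ht.le]
        ring
      calc (∫ u in Set.Ioi h, (u - h) ^ 2 * Real.exp (-(t/2) * u ^ 2))
          = ∫ u in Set.Ioi h,
              (fun v => (v / Real.sqrt t - h) ^ 2 * Real.exp (-v ^ 2 / 2)) (Real.sqrt t * u) :=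
            setIntegral_congr_fun measurableSet_Ioi fun u _ => key u
        _ = (Real.sqrt t)⁻¹ • ∫ v in Set.Ioi (Real.sqrt t * h),
              (v / Real.sqrt t - h) ^ 2 * Real.exp (-v ^ 2 / 2) :=
            integral_comp_mul_left_Ioi
              (fun v => (v / Real.sqrt t - h) ^ 2 * Real.exp (-v ^ 2 / 2)) h hst
        _ = (Real.sqrt t)⁻¹ * ∫ v, F t v := by
            rw [smul_eq_mul]
            congr 1
            exact (integral_indicator measurableSet_Ioi).symm
    have eI : (∫ y in Set.Ioi (0:ℝ), y ^ 2 * Real.exp (-(h * y + y ^ 2 / 2) * t))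
        = Real.exp (h ^ 2 * t / 2) * ((Real.sqrt t)⁻¹ * ∫ v, F t v) := by
      simp only [e1]
      rw [integral_const_mul, e2, e3]
    rw [eI]
    have ht32 : t ^ ((3:ℝ)/2) = t * Real.sqrt t := by
      rw [show (3:ℝ)/2 = 1 + 1/2 by norm_num, Real.rpow_add ht, Real.rpow_one,
        ← Real.sqrt_eq_rpow]
    rw [ht32]
    have he : Real.exp (h ^ 2 * t / 2) ≠ 0 := Real.exp_ne_zero _
    field_simp
  -- conclude
  have hfin := hJ.const_mul (Real.sqrt (2 / π) / (2 * h ^ 2))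
  have hone : (Real.sqrt (2 / π) / (2 * h ^ 2)) * (h ^ 2 * Real.sqrt (2 * π)) = 1 := by
    have h4 : Real.sqrt (2 / π) * Real.sqrt (2 * π) = 2 := by
      rw [← Real.sqrt_mul (by positivity)]
      rw [show (2 / π) * (2 * π) = 4 by field_simp; ring]
      rw [show (4:ℝ) = 2 ^ 2 by norm_num, Real.sqrt_sq (by norm_num)]
    have hrw : (Real.sqrt (2 / π) / (2 * h ^ 2)) * (h ^ 2 * Real.sqrt (2 * π))
        = (Real.sqrt (2 / π) * Real.sqrt (2 * π)) * (h ^ 2 / (2 * h ^ 2)) := by ring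
    rw [hrw, h4]
    field_simp
  rw [hone] at hfin
  exact hfin.congr' heq
end

section
/- For fixed x ∈ ℝ, δ > 0, and ν + 2h < 0 with h < 0, the limit lim_{t→∞} ∫₀^∞ ((4y − 2x)/δ − 2h√t) · exp((2yx − 2y²)/δ) · exp((ν + 2h)√t y) dy = 2h/(ν + 2h). -/
open MeasureTheory Filter Topology Real Set

/-!
This is Watson's lemma. Writing `s = √t`, the integrand is `s F_s(y) exp((ν + 2h) s y)` with
`F_s(y) = (s⁻¹ (4y − 2x)/δ − 2h) exp((2yx − 2y²)/δ)`. The substitution `u = s y` turns the integral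
into `∫₀^∞ F_s(u/s) exp((ν + 2h) u) du`; for large `s` the integrand is dominated by a multiple of
`exp((ν + 2h) u / 2)` and tends pointwise to `−2h exp((ν + 2h) u)`, so by
dominated convergence the limit is `−2h ∫₀^∞ exp((ν + 2h) u) du = 2h / (ν + 2h)`.
-/

lemma integral_Ioi_mul_mul_exp_eq {F : ℝ → ℝ} (c : ℝ) {s : ℝ} (hs : 0 < s) :
    ∫ y in Ioi (0:ℝ), s * F y * exp (c * s * y) = ∫ u in Ioi (0:ℝ), F (u / s) * exp (c * u) := by
  have h := integral_comp_mul_left_Ioi' (fun u => F (u / s) * exp (c * u)) 0 hs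
  simp only [mul_zero, mul_div_cancel_left₀ _ hs.ne', smul_eq_mul] at h
  rw [← h, ← integral_const_mul]
  refine setIntegral_congr_fun measurableSet_Ioi fun y _ => ?_
  ring_nf

theorem tendsto_integral_Ioi_mul_mul_exp {F : ℝ → ℝ → ℝ} {c b C L : ℝ} (hc : c < 0)
    (hmeas : ∀ᶠ s in atTop, Measurable (F s))
    (hbound : ∀ᶠ s in atTop, ∀ y > 0, |F s y| ≤ C * exp (b * y))
    (hlim : ∀ u > 0, Tendsto (fun s => F s (u / s)) atTop (𝓝 L)) :
    Tendsto (fun s => ∫ y in Ioi (0:ℝ), s * F s y * exp (c * s * y)) atTop (𝓝 (-L / c)) := by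
  have hvalue : ∫ u in Ioi (0:ℝ), L * exp (c * u) = -L / c := by
    rw [integral_const_mul, integral_exp_mul_Ioi hc, mul_zero, exp_zero]
    ring
  have hrate : ∀ᶠ s in atTop, b / s < -c / 2 :=
    (tendsto_const_nhds.div_atTop tendsto_id).eventually_lt_const (by linarith)
  have hrescaled : Tendsto (fun s => ∫ u in Ioi (0:ℝ), F s (u / s) * exp (c * u)) atTop
      (𝓝 (∫ u in Ioi (0:ℝ), L * exp (c * u))) := by
    refine tendsto_integral_filter_of_dominated_convergence (fun u => C * exp (c / 2 * u))
      ?_ ?_ ?_ ?_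
    · filter_upwards [hmeas] with s hF
      exact ((hF.comp (measurable_id.div_const s)).mul (by fun_prop)).aestronglyMeasurable
    · filter_upwards [hbound, hrate, eventually_gt_atTop 0] with s hF hbs hs
      refine (ae_restrict_iff' measurableSet_Ioi).2 (ae_of_all _ fun u (hu : 0 < u) => ?_)
      have hFu := hF (u / s) (by positivity)
      have hC : 0 ≤ C := nonneg_of_mul_nonneg_left ((abs_nonneg _).trans hFu) (exp_pos _)
      have hexp : exp (b * (u / s)) * exp (c * u) ≤ exp (c / 2 * u) := by
        rw [← exp_add, exp_le_exp, mul_div_assoc', mul_comm b u, mul_div_assoc]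
        nlinarith
      calc ‖F s (u / s) * exp (c * u)‖ = |F s (u / s)| * exp (c * u) := by
            rw [norm_mul, norm_of_nonneg (exp_pos _).le, norm_eq_abs]
        _ ≤ C * (exp (b * (u / s)) * exp (c * u)) := by rw [← mul_assoc]; gcongr
        _ ≤ C * exp (c / 2 * u) := by gcongr
    · exact (integrableOn_exp_mul_Ioi (by linarith) 0).const_mul C
    · exact (ae_restrict_iff' measurableSet_Ioi).2
        (ae_of_all _ fun u hu => (hlim u hu).mul_const _)
  rw [← hvalue]
  refine hrescaled.congr' ?_
  filter_upwards [eventually_gt_atTop 0] with s hs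
  exact (integral_Ioi_mul_mul_exp_eq c hs).symm

noncomputable def bridgeAmplitude (x δ h s y : ℝ) : ℝ :=
  (s⁻¹ * ((4 * y - 2 * x) / δ) - 2 * h) * exp ((2 * y * x - 2 * y ^ 2) / δ)

section bridgeAmplitude

variable (x δ h : ℝ)

lemma mul_bridgeAmplitude {s : ℝ} (hs : s ≠ 0) (y : ℝ) :
    s * bridgeAmplitude x δ h s y =
      ((4 * y - 2 * x) / δ - 2 * h * s) * exp ((2 * y * x - 2 * y ^ 2) / δ) := by
  unfold bridgeAmplitude
  field_simp

lemma measurable_bridgeAmplitude (s : ℝ) : Measurable (bridgeAmplitude x δ h s) := by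
  unfold bridgeAmplitude
  fun_prop

lemma tendsto_bridgeAmplitude (u : ℝ) :
    Tendsto (fun s => bridgeAmplitude x δ h s (u / s)) atTop (𝓝 (-2 * h)) := by
  have hφ : Continuous fun r : ℝ =>
      (r * ((4 * (u * r) - 2 * x) / δ) - 2 * h) *
        exp ((2 * (u * r) * x - 2 * (u * r) ^ 2) / δ) := by
    fun_prop
  simpa [bridgeAmplitude, div_eq_mul_inv u, Function.comp_def]
    using (hφ.tendsto 0).comp tendsto_inv_atTop_zero

lemma abs_bridgeAmplitude_le (hδ : 0 < δ) {s y : ℝ} (hs : 1 ≤ s) (hy : 0 ≤ y) :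
    |bridgeAmplitude x δ h s y| ≤
      ((4 + 2 * |x|) / δ + 2 * |h|) * exp ((1 + 2 * |x| / δ) * y) := by
  have hprefactor : |s⁻¹ * ((4 * y - 2 * x) / δ) - 2 * h| ≤
      ((4 + 2 * |x|) / δ + 2 * |h|) * exp y := by
    have hinv : |s⁻¹| ≤ 1 := by
      rw [abs_inv]; exact inv_le_one_of_one_le₀ (hs.trans (le_abs_self s))
    have hlin : |4 * y - 2 * x| ≤ (4 + 2 * |x|) * (y + 1) := by
      rw [abs_le]; constructor <;> nlinarith [abs_nonneg x, le_abs_self x, neg_abs_le x]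
    calc |s⁻¹ * ((4 * y - 2 * x) / δ) - 2 * h|
        ≤ |s⁻¹| * (|4 * y - 2 * x| / δ) + 2 * |h| := by
          refine (abs_sub _ _).trans_eq ?_
          rw [abs_mul, abs_div, abs_of_pos hδ, abs_mul, abs_two]
      _ ≤ 1 * ((4 + 2 * |x|) * (y + 1) / δ) + 2 * |h| * (y + 1) := by
          gcongr ?_ + ?_
          · exact mul_le_mul hinv (by gcongr) (by positivity) zero_le_one
          · exact le_mul_of_one_le_right (by positivity) (by linarith)
      _ = ((4 + 2 * |x|) / δ + 2 * |h|) * (y + 1) := by ring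
      _ ≤ ((4 + 2 * |x|) / δ + 2 * |h|) * exp y := by gcongr; exact add_one_le_exp y
  have hgauss : exp ((2 * y * x - 2 * y ^ 2) / δ) ≤ exp (2 * |x| / δ * y) := by
    rw [exp_le_exp, div_mul_eq_mul_div]
    gcongr
    nlinarith [le_abs_self x, sq_nonneg y]
  rw [bridgeAmplitude, abs_mul, abs_of_pos (exp_pos _),
    show (1 + 2 * |x| / δ) * y = y + 2 * |x| / δ * y by ring, exp_add, ← mul_assoc]
  gcongr

end bridgeAmplitude

theorem watson_limit_general (x δ ν h : ℝ) (hδ : 0 < δ) (hνh : ν + 2 * h < 0) :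
    Tendsto
      (fun t : ℝ =>
        ∫ y in Set.Ioi (0:ℝ),
          ((4 * y - 2 * x) / δ - 2 * h * sqrt t) * exp ((2 * y * x - 2 * y ^ 2) / δ) *
            exp ((ν + 2 * h) * sqrt t * y))
      atTop (𝓝 (2 * h / (ν + 2 * h))) := by
  have hwatson := tendsto_integral_Ioi_mul_mul_exp hνh
    (Eventually.of_forall (measurable_bridgeAmplitude x δ h))
    ((eventually_ge_atTop 1).mono fun s hs y hy => abs_bridgeAmplitude_le x δ h hδ hs hy.le)
    (fun u _ => tendsto_bridgeAmplitude x δ h u)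
  rw [neg_mul, neg_neg] at hwatson
  refine (hwatson.comp tendsto_sqrt_atTop).congr' ?_
  filter_upwards [eventually_gt_atTop 0] with t ht
  refine setIntegral_congr_fun measurableSet_Ioi fun y _ => ?_
  simp only [mul_bridgeAmplitude x δ h (sqrt_pos.2 ht).ne']

/-- The Watson's-lemma limit arising from the maximum of a Brownian bridge with drifted
endpoint: for fixed `x ∈ ℝ`, `δ > 0`, `h < 0` and `ν + 2h < 0`,
`lim_{t→∞} ∫₀^∞ ((4y − 2x)/δ − 2h√t) exp((2yx − 2y²)/δ) exp((ν+2h)√t y) dy = 2h/(ν+2h)`. -/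
theorem watson_limit (x δ ν h : ℝ) (hδ : 0 < δ) (hh : h < 0) (hνh : ν + 2 * h < 0) :
    Tendsto
      (fun t : ℝ =>
        ∫ y in Set.Ioi (0:ℝ),
          ((4 * y - 2 * x) / δ - 2 * h * sqrt t) * exp ((2 * y * x - 2 * y ^ 2) / δ) *
            exp ((ν + 2 * h) * sqrt t * y))
      atTop (𝓝 (2 * h / (ν + 2 * h))) :=
  watson_limit_general x δ ν h hδ hνh
end
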